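/- If n ≥ 3 is odd and 2n + 1 is prime, then the labeling of GP(n,1) assigning i to v_i for 1 ≤ i ≤ n, 2n+1 to u_1, and 2n+1−i to u_i for 2 ≤ i ≤ n, is injective with values in {1,...,2n+1} and gives coprime labels to every pair of adjacent vertices. -/

import Mathlib

/-- The prism graph `GP(n,1)`: two `n`-cycles `v` (inl) and `u` (inr) joined by a
perfect matching. -/
def prismGraph (n : ℕ) : SimpleGraph (ZMod n ⊕ ZMod n) :=
  SimpleGraph.fromRel (fun x y =>
    (∃ i : ZMod n, x = Sum.inl i ∧ y = Sum.inl (i + 1)) ∨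
    (∃ i : ZMod n, x = Sum.inr i ∧ y = Sum.inr (i + 1)) ∨
    (∃ i : ZMod n, x = Sum.inl i ∧ y = Sum.inr i))

/-- The labeling: `v_i ↦ i`, `u_1 ↦ 2n+1`, `u_i ↦ 2n+1-i` for `2 ≤ i ≤ n`
(vertex of value `j` represents index `j+1`). -/
def prismLabel7 (n : ℕ) : ZMod n ⊕ ZMod n → ℕ
  | Sum.inl i => i.val + 1
  | Sum.inr i => if i.val = 0 then 2 * n + 1 else 2 * n + 1 - (i.val + 1)

/-!
Every edge joins labels that are consecutive integers, that sum to the prime `p = 2n + 1`,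
or one of which is `1` or `p` itself (the latter only against labels in `(0, p)`); all such
pairs are coprime. Injectivity holds because the `v`-labels fill `[1, n]` and the
`u`-labels lie in `[n + 1, 2n + 1]`.
-/

theorem ZMod.val_add_one_of_ne_zero {n : ℕ} [NeZero n] {i : ZMod n} (h : i + 1 ≠ 0) :
    (i + 1).val = i.val + 1 := by
  obtain ⟨m, rfl⟩ := Nat.exists_eq_succ_of_ne_zero (NeZero.ne n)
  refine (Fin.val_add_one i).trans (if_neg ?_)
  rintro rfl
  exact h (Fin.last_add_one m)

theorem Nat.coprime_self_add_one (m : ℕ) : Nat.Coprime m (m + 1) :=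
  Nat.coprime_self_add_right.mpr (Nat.coprime_one_right m)

theorem Nat.coprime_of_prime_add {a b : ℕ} (ha : a ≠ 0) (hb : b ≠ 0) (hp : (a + b).Prime) :
    Nat.Coprime a b :=
  Nat.coprime_self_add_right.mp (Nat.coprime_of_lt_prime ha (by omega) hp).symm

section prismLabel7

variable {n : ℕ}

@[simp]
theorem prismLabel7_inl (i : ZMod n) : prismLabel7 n (.inl i) = i.val + 1 := rfl

@[simp]
theorem prismLabel7_inr_zero : prismLabel7 n (.inr 0) = 2 * n + 1 := by
  simp [prismLabel7]

theorem prismLabel7_inr_of_ne_zero {i : ZMod n} (hi : i ≠ 0) :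
    prismLabel7 n (.inr i) = 2 * n - i.val := by
  simp only [prismLabel7, ZMod.val_eq_zero, if_neg hi]
  omega

variable [NeZero n]

theorem prismLabel7_inl_mem_Icc (i : ZMod n) : prismLabel7 n (.inl i) ∈ Finset.Icc 1 n := by
  have := i.val_lt
  simp only [prismLabel7_inl, Finset.mem_Icc]
  omega

theorem prismLabel7_inr_mem_Icc (i : ZMod n) :
    prismLabel7 n (.inr i) ∈ Finset.Icc (n + 1) (2 * n + 1) := by
  have := i.val_lt
  rcases eq_or_ne i 0 with rfl | hi
  · simp only [prismLabel7_inr_zero, Finset.mem_Icc]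
    omega
  · have := (ZMod.val_ne_zero i).mpr hi
    rw [prismLabel7_inr_of_ne_zero hi, Finset.mem_Icc]
    omega

theorem prismLabel7_mem_Icc (x : ZMod n ⊕ ZMod n) :
    prismLabel7 n x ∈ Finset.Icc 1 (2 * n + 1) := by
  rcases x with i | i
  · exact Finset.Icc_subset_Icc le_rfl (by omega) (prismLabel7_inl_mem_Icc i)
  · exact Finset.Icc_subset_Icc (by omega) le_rfl (prismLabel7_inr_mem_Icc i)

theorem prismLabel7_inr_injective : Function.Injective (prismLabel7 n ∘ .inr) := by
  intro i j h
  have := i.val_lt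
  have := j.val_lt
  simp only [Function.comp_apply] at h
  rcases eq_or_ne i 0 with rfl | hi0 <;> rcases eq_or_ne j 0 with rfl | hj0
  · rfl
  · rw [prismLabel7_inr_zero, prismLabel7_inr_of_ne_zero hj0] at h
    omega
  · rw [prismLabel7_inr_zero, prismLabel7_inr_of_ne_zero hi0] at h
    omega
  · rw [prismLabel7_inr_of_ne_zero hi0, prismLabel7_inr_of_ne_zero hj0] at h
    exact ZMod.val_injective n (by omega)

theorem prismLabel7_injective : Function.Injective (prismLabel7 n) := by
  rintro (i | i) (j | j) h
  · exact congrArg _ (ZMod.val_injective n (by simpa using h))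
  · have := Finset.mem_Icc.mp (prismLabel7_inl_mem_Icc i)
    have := Finset.mem_Icc.mp (prismLabel7_inr_mem_Icc j)
    omega
  · have := Finset.mem_Icc.mp (prismLabel7_inr_mem_Icc i)
    have := Finset.mem_Icc.mp (prismLabel7_inl_mem_Icc j)
    omega
  · exact congrArg _ (prismLabel7_inr_injective h)

theorem coprime_prismLabel7_inl_add_one (i : ZMod n) :
    Nat.Coprime (prismLabel7 n (.inl i)) (prismLabel7 n (.inl (i + 1))) := by
  rcases eq_or_ne (i + 1) 0 with h | h
  · simp [h]
  · rw [prismLabel7_inl, prismLabel7_inl, ZMod.val_add_one_of_ne_zero h]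
    exact Nat.coprime_self_add_one _

variable (hp : (2 * n + 1).Prime)
include hp

theorem coprime_prismLabel7_inr_zero {j : ZMod n} (hj : j ≠ 0) :
    Nat.Coprime (prismLabel7 n (.inr 0)) (prismLabel7 n (.inr j)) := by
  have := j.val_lt
  rw [prismLabel7_inr_zero, prismLabel7_inr_of_ne_zero hj]
  exact Nat.coprime_of_lt_prime (by omega) (by omega) hp

theorem coprime_prismLabel7_inr_add_one {i : ZMod n} (hi : i ≠ i + 1) :
    Nat.Coprime (prismLabel7 n (.inr i)) (prismLabel7 n (.inr (i + 1))) := by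
  rcases eq_or_ne i 0 with rfl | hi0
  · exact coprime_prismLabel7_inr_zero hp (Ne.symm hi)
  rcases eq_or_ne (i + 1) 0 with h | h
  · rw [h]
    exact (coprime_prismLabel7_inr_zero hp hi0).symm
  have hval := ZMod.val_add_one_of_ne_zero h
  have := (i + 1).val_lt
  rw [prismLabel7_inr_of_ne_zero hi0, prismLabel7_inr_of_ne_zero h, hval,
    show 2 * n - i.val = 2 * n - (i.val + 1) + 1 by omega]
  exact (Nat.coprime_self_add_one _).symm

theorem coprime_prismLabel7_inl_inr (i : ZMod n) :
    Nat.Coprime (prismLabel7 n (.inl i)) (prismLabel7 n (.inr i)) := by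
  rcases eq_or_ne i 0 with rfl | hi
  · simp
  · have := i.val_lt
    rw [prismLabel7_inl, prismLabel7_inr_of_ne_zero hi]
    exact Nat.coprime_of_prime_add (by omega) (by omega)
      (by rwa [show i.val + 1 + (2 * n - i.val) = 2 * n + 1 by omega])

theorem coprime_prismLabel7_of_adj {x y : ZMod n ⊕ ZMod n} (h : (prismGraph n).Adj x y) :
    Nat.Coprime (prismLabel7 n x) (prismLabel7 n y) := by
  obtain ⟨hne, (⟨i, rfl, rfl⟩ | ⟨i, rfl, rfl⟩ | ⟨i, rfl, rfl⟩) |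
    (⟨i, rfl, rfl⟩ | ⟨i, rfl, rfl⟩ | ⟨i, rfl, rfl⟩)⟩ := h
  · exact coprime_prismLabel7_inl_add_one i
  · exact coprime_prismLabel7_inr_add_one hp (fun h => hne (congrArg _ h))
  · exact coprime_prismLabel7_inl_inr hp i
  · exact (coprime_prismLabel7_inl_add_one i).symm
  · exact (coprime_prismLabel7_inr_add_one hp (fun h => hne (congrArg _ h.symm))).symm
  · exact (coprime_prismLabel7_inl_inr hp i).symm

end prismLabel7

theorem prism_coprime_labeling_of_twoNPlusOne_prime_general (n : ℕ)
    (hp : Nat.Prime (2 * n + 1)) :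
    Function.Injective (prismLabel7 n) ∧
    (∀ x, prismLabel7 n x ∈ Finset.Icc 1 (2 * n + 1)) ∧
    (∀ x y, (prismGraph n).Adj x y →
      Nat.Coprime (prismLabel7 n x) (prismLabel7 n y)) := by
  have : NeZero n := ⟨by rintro rfl; exact Nat.not_prime_one hp⟩
  exact ⟨prismLabel7_injective, prismLabel7_mem_Icc, fun _ _ => coprime_prismLabel7_of_adj hp⟩

theorem prism_coprime_labeling_of_twoNPlusOne_prime (n : ℕ) (hn : 3 ≤ n)
    (hodd : Odd n) (hp : Nat.Prime (2 * n + 1)) :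
    Function.Injective (prismLabel7 n) ∧
    (∀ x, prismLabel7 n x ∈ Finset.Icc 1 (2 * n + 1)) ∧
    (∀ x y, (prismGraph n).Adj x y →
      Nat.Coprime (prismLabel7 n x) (prismLabel7 n y)) :=
  prism_coprime_labeling_of_twoNPlusOne_prime_general n hp
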